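/- arXiv:1803.08818 — 3 statements merged into one kernel-verified Lean document; each statement's English description precedes it below -/
import Mathlib

section
/- Let p_{i,n} denote the number of words of length i over distinct letters of [n] whose complementary letter set [n] \ alph(u) is an arithmetic progression of length n-i with positive common difference (i.e., periodic). Then p_{i,n} = (q/2)·(r + i + 1)·i!, where m = n - i - 1 and q, r are the quotient and remainder of n divided by m. -/
/-- Vector of consecutive differences of a list. -/
def diffs (l : List ℕ) : List ℕ := List.zipWith (fun a b => b - a) l l.tail

/-- Δ(X): consecutive differences of the increasing enumeration of a finite set. -/
def setDiffs (X : Finset ℕ) : List ℕ := diffs (X.sort (· ≤ ·))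

/-- c̄(Δ) = {c, c+d₁, c+d₁+d₂, ...}. -/
def barSet (c : ℕ) (ds : List ℕ) : Finset ℕ :=
  ((List.range (ds.length + 1)).map (fun j => c + (ds.take j).sum)).toFinset

/-- A finite set (of cardinality ≥ 2) is periodic if its consecutive differences are constant. -/
def PeriodicSet (X : Finset ℕ) : Prop :=
  2 ≤ X.card ∧ ∃ d, 0 < d ∧ setDiffs X = List.replicate (X.card - 1) d

/-- A vector is periodic if all its entries are equal to some positive d. -/
def PerVec (v : List ℕ) : Prop := ∃ d, 0 < d ∧ v = List.replicate v.length d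

/-- Membership in D_{|u|,n}: injective word over [n], complement periodic,
no proper nonempty prefix has a periodic complement. -/
def MemD (n : ℕ) (u : List ℕ) : Prop :=
  u.Nodup ∧ (∀ x ∈ u, x ∈ Finset.Icc 1 n) ∧
  PeriodicSet (Finset.Icc 1 n \ u.toFinset) ∧
  ∀ j, 1 ≤ j → j < u.length → ¬ PeriodicSet (Finset.Icc 1 n \ (u.take j).toFinset)

/-- A list is a permutation word of [n]. -/
def IsPermList (n : ℕ) (s : List ℕ) : Prop :=
  s.length = n ∧ s.Nodup ∧ s.toFinset = Finset.Icc 1 n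

/-- s is the inverse permutation word of u (both permutations of [n]). -/
def InvPerm (n : ℕ) (u s : List ℕ) : Prop :=
  IsPermList n u ∧ IsPermList n s ∧
  ∀ j k, j < n → k < n → (u.getD j 0 = k + 1 ↔ s.getD k 0 = j + 1)

/-- Δ_i(s): consecutive differences of {s_i, ..., s_n} (1-indexed). -/
def deltaVec (s : List ℕ) (i : ℕ) : List ℕ := setDiffs (s.drop (i - 1)).toFinset

/-- One transition of a pyramidal sequence: merge two adjacent entries,
or delete the leftmost, or delete the rightmost entry. -/
def PyrStep (v w : List ℕ) : Prop :=
  (∃ l a b r, v = l ++ a :: b :: r ∧ w = l ++ (a + b) :: r) ∨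
  (∃ a r, v = a :: r ∧ w = r) ∨
  (∃ l a, v = l ++ [a] ∧ w = l)

/-- A pyramidal sequence of vectors of size n, encoded as a list [Δ₁, ..., Δ_{n-1}]. -/
def IsPyramidal (n : ℕ) (P : List (List ℕ)) : Prop :=
  P.length = n - 1 ∧ P.getD 0 [] = List.replicate (n - 1) 1 ∧
  ∀ i, i + 1 < n - 1 → PyrStep (P.getD i []) (P.getD (i + 1) [])

/-- A trapezoidal sequence of height i of size n, encoded as [Δ₁, ..., Δ_{i+1}]:
Δ_{i+1} periodic, Δ_j not periodic for 2 ≤ j ≤ i. -/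
def IsTrapezoidal (n i : ℕ) (T : List (List ℕ)) : Prop :=
  T.length = i + 1 ∧ T.getD 0 [] = List.replicate (n - 1) 1 ∧
  (∀ j, j < i → PyrStep (T.getD j []) (T.getD (j + 1) [])) ∧
  PerVec (T.getD i []) ∧
  ∀ j, 1 ≤ j → j < i → ¬ PerVec (T.getD j [])

/-- Non-interval permutation of [m]: no prefix of length l, 2 ≤ l < m, has as
letter set an interval of consecutive integers. -/
def IsNonIntervalPerm (m : ℕ) (s : List ℕ) : Prop :=
  IsPermList m s ∧ ∀ l, 2 ≤ l → l < m → ¬ ∃ a, (s.take l).toFinset = Finset.Icc a (a + l - 1)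

/-- v is obtained from u by a rigid shift of height h by k places to the left:
columns of height < h are untouched and receive nothing; each position of height ≥ h
receives the excess (over h) of the column k places to its right; every block strictly
above the cut lands on a column of height ≥ h. -/
def RigidShiftL (n h k : ℕ) (u v : List ℕ) : Prop :=
  IsPermList n u ∧ IsPermList n v ∧
  (∀ j, j < n → u.getD j 0 < h → v.getD j 0 = u.getD j 0) ∧
  (∀ j, j < n → h ≤ u.getD j 0 → v.getD j 0 = h + (u.getD (j + k) 0 - h)) ∧
  (∀ j, j < n → h < u.getD j 0 → k ≤ j ∧ h ≤ u.getD (j - k) 0)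

/-- Strong shift equivalence: finite sequences of rigid shifts (in either direction). -/
def StrongShiftEq (n : ℕ) (u v : List ℕ) : Prop :=
  Relation.ReflTransGen (fun a b => ∃ h k, RigidShiftL n h k a b ∨ RigidShiftL n h k b a) u v

/-- Shift equivalence: finite sequences of rigid shifts and reversals. -/
def ShiftEq (n : ℕ) (u v : List ℕ) : Prop :=
  Relation.ReflTransGen
    (fun a b => (∃ h k, RigidShiftL n h k a b ∨ RigidShiftL n h k b a) ∨ b = a.reverse) u v

/-- Super-strong Wilf equivalence of permutation words of [n], characterized by
equality of all Δ_i of the inverses. -/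
def SSWilf (n : ℕ) (u v : List ℕ) : Prop :=
  ∃ s t, InvPerm n u s ∧ InvPerm n v t ∧ ∀ i, 1 ≤ i → i ≤ n - 1 → deltaVec s i = deltaVec t i

/-! Sending a word `u` to `X = [n] \ u.toFinset` exhibits the words as the orderings of the
complements of the periodic `m`-subsets `X` of `[n]`, `m = n - i`, so their number is `i!` times
the number of such `X`. These are the progressions `a, a + d, …, a + (m - 1) d` with `d ≥ 1` and
`1 ≤ a ≤ n - (m - 1) d`, so there are `∑_{d ≥ 1} (n - (m - 1) d)` of them; summing this arithmetic
series and writing `n = q (m - 1) + r` gives the closed form. -/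

def apList (a d m : ℕ) : List ℕ := (List.range m).map fun j => a + j * d

def apFinset (a d m : ℕ) : Finset ℕ := (apList a d m).toFinset

section ArithmeticProgression

variable {a d m : ℕ}

lemma diffs_cons_cons (a b : ℕ) (t : List ℕ) : diffs (a :: b :: t) = (b - a) :: diffs (b :: t) :=
  rfl

@[simp] lemma length_apList : (apList a d m).length = m := by simp [apList]

lemma mem_apList {x : ℕ} : x ∈ apList a d m ↔ ∃ j < m, a + j * d = x := by simp [apList]

lemma apList_succ : apList a d (m + 1) = a :: apList (a + d) d m := by
  simp only [apList, List.range_succ_eq_map, List.map_cons, List.map_map]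
  congr 1
  · ring
  · congr 1; funext j; simp only [Function.comp, Nat.succ_eq_add_one]; ring

lemma diffs_apList_succ : diffs (apList a d (m + 1)) = List.replicate m d := by
  induction m generalizing a with
  | zero => rfl
  | succ k ih =>
    rw [apList_succ, apList_succ, diffs_cons_cons, ← apList_succ, ih, List.replicate_succ,
      Nat.add_sub_cancel_left]

lemma pairwise_lt_apList (hd : 0 < d) : (apList a d m).Pairwise (· < ·) :=
  List.pairwise_lt_range.map _ fun j k (h : j < k) => by
    have := (Nat.mul_lt_mul_right hd).mpr h
    omega

lemma sort_apFinset (hd : 0 < d) : (apFinset a d m).sort (· ≤ ·) = apList a d m :=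
  (List.toFinset_sort _ ((pairwise_lt_apList hd).imp ne_of_lt)).mpr
    ((pairwise_lt_apList hd).imp le_of_lt)

lemma card_apFinset (hd : 0 < d) : (apFinset a d m).card = m := by
  rw [apFinset, List.toFinset_card_of_nodup ((pairwise_lt_apList hd).imp ne_of_lt),
    length_apList]

lemma periodicSet_apFinset (hd : 0 < d) (hm : 2 ≤ m) : PeriodicSet (apFinset a d m) := by
  obtain ⟨k, rfl⟩ : ∃ k, m = k + 1 := ⟨m - 1, by omega⟩
  refine ⟨by rwa [card_apFinset hd], d, hd, ?_⟩
  rw [card_apFinset hd, setDiffs, sort_apFinset hd, diffs_apList_succ, Nat.add_sub_cancel]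

lemma apFinset_inj {a' d' : ℕ} (hd : 0 < d) (hd' : 0 < d') (hm : 2 ≤ m)
    (h : apFinset a d m = apFinset a' d' m) : a = a' ∧ d = d' := by
  obtain ⟨k, rfl⟩ : ∃ k, m = k + 2 := ⟨m - 2, by omega⟩
  have h' := congrArg (·.sort (· ≤ ·)) h
  simp only [sort_apFinset hd, sort_apFinset hd', apList_succ, List.cons.injEq] at h'
  omega

lemma eq_apList_of_diffs_eq_replicate :
    ∀ {t : List ℕ} {a : ℕ}, (a :: t).Pairwise (· ≤ ·) →
      diffs (a :: t) = List.replicate t.length d → a :: t = apList a d (t.length + 1)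
  | [], _, _, _ => by simp [apList]
  | b :: t, a, hs, hdiffs => by
    simp only [diffs_cons_cons, List.length_cons, List.replicate_succ, List.cons.injEq] at hdiffs
    have hab : a ≤ b := List.rel_of_pairwise_cons hs List.mem_cons_self
    obtain rfl : b = a + d := by omega
    rw [List.length_cons, apList_succ,
      ← eq_apList_of_diffs_eq_replicate (List.pairwise_cons.mp hs).2 hdiffs.2]

lemma exists_eq_apFinset_of_periodicSet {X : Finset ℕ} (hX : PeriodicSet X) :
    ∃ a d, 0 < d ∧ X = apFinset a d X.card := by
  obtain ⟨hcard, d, hd, hdiffs⟩ := hX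
  obtain ⟨a, t, hat⟩ : ∃ a t, X.sort (· ≤ ·) = a :: t :=
    List.exists_cons_of_length_pos (by rw [Finset.length_sort]; omega)
  have ht : t.length = X.card - 1 := by
    rw [← Finset.length_sort (· ≤ ·), hat, List.length_cons, Nat.add_sub_cancel]
  have hap := eq_apList_of_diffs_eq_replicate (hat ▸ X.pairwise_sort (· ≤ ·))
    (by rw [ht, ← hat, ← setDiffs, hdiffs])
  refine ⟨a, d, hd, ?_⟩
  rw [show X.card = t.length + 1 by omega, apFinset, ← hap, ← hat, Finset.sort_toFinset]

lemma apFinset_subset_Icc_iff {n : ℕ} (hm : 1 ≤ m) :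
    apFinset a d m ⊆ Finset.Icc 1 n ↔ 1 ≤ a ∧ a + (m - 1) * d ≤ n := by
  simp only [apFinset, Finset.subset_iff, List.mem_toFinset, mem_apList, Finset.mem_Icc]
  constructor
  · intro h
    exact ⟨(h ⟨0, hm, by simp⟩).1, (h ⟨m - 1, by omega, rfl⟩).2⟩
  · rintro ⟨ha, hn⟩ _ ⟨j, hj, rfl⟩
    have : j * d ≤ (m - 1) * d := Nat.mul_le_mul_right d (by omega)
    omega

end ArithmeticProgression

lemma Int.two_mul_sum_Icc_sub_mul (D : ℕ) (n k : ℤ) :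
    2 * ∑ d ∈ Finset.Icc 1 D, (n - k * d) = D * (2 * n - k * (D + 1)) := by
  induction D with
  | zero => simp
  | succ D ih =>
    rw [Finset.sum_Icc_succ_top (by omega), mul_add, ih]
    push_cast
    ring

lemma Nat.two_mul_sum_Icc_div_sub_mul (n k : ℕ) :
    2 * ∑ d ∈ Finset.Icc 1 ((n - 1) / k), (n - k * d) = n / k * (n % k + (n - k)) := by
  rcases Nat.eq_zero_or_pos k with rfl | hk
  · simp
  rcases Nat.eq_zero_or_pos n with rfl | hn
  · simp
  obtain ⟨D, t, ht, rfl, hD⟩ : ∃ D t, t < k ∧ n = k * D + (t + 1) ∧ (n - 1) / k = D :=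
    ⟨(n - 1) / k, (n - 1) % k, Nat.mod_lt _ hk, by have := Nat.div_add_mod (n - 1) k; omega, rfl⟩
  rw [hD]
  have hsum : ((2 * ∑ d ∈ Finset.Icc 1 D, (k * D + (t + 1) - k * d) : ℕ) : ℤ) =
      D * (2 * (k * D + (t + 1)) - k * (D + 1)) := by
    rw [← Int.two_mul_sum_Icc_sub_mul]
    push_cast
    refine congrArg _ (Finset.sum_congr rfl fun d hd => ?_)
    have := Nat.mul_le_mul_left k (Finset.mem_Icc.mp hd).2
    push_cast [Nat.cast_sub (by omega : k * d ≤ k * D + (t + 1))]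
    rfl
  apply Nat.cast_injective (R := ℤ)
  rw [hsum]
  rcases (by omega : t + 1 < k ∨ t + 1 = k) with hlt | rfl
  · rw [Nat.mul_add_div hk, Nat.div_eq_of_lt hlt, Nat.mul_add_mod, Nat.mod_eq_of_lt hlt]
    rcases Nat.eq_zero_or_pos D with rfl | hD0
    · simp
    push_cast [Nat.cast_sub (by nlinarith : k ≤ k * D + (t + 1))]
    ring
  · rw [← Nat.mul_succ, Nat.mul_div_cancel_left _ hk, Nat.mul_mod_right]
    push_cast [Nat.cast_sub (by nlinarith : t + 1 ≤ (t + 1) * D.succ)]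
    ring

section PeriodicSubsets

open scoped Classical in
noncomputable def periodicSubsets (n m : ℕ) : Finset (Finset ℕ) :=
  ((Finset.Icc 1 n).powersetCard m).filter PeriodicSet

lemma periodicSubsets_eq_biUnion {n m : ℕ} (hm : 2 ≤ m) :
    periodicSubsets n m = (Finset.Icc 1 ((n - 1) / (m - 1))).biUnion
      fun d => (Finset.Icc 1 (n - (m - 1) * d)).image fun a => apFinset a d m := by
  ext X
  simp only [periodicSubsets, Finset.mem_filter, Finset.mem_powersetCard, Finset.mem_biUnion,
    Finset.mem_image, Finset.mem_Icc]
  constructor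
  · rintro ⟨⟨hsub, hcard⟩, hper⟩
    obtain ⟨a, d, hd, hX⟩ := exists_eq_apFinset_of_periodicSet hper
    rw [hcard] at hX
    rw [hX, apFinset_subset_Icc_iff (by omega)] at hsub
    have hdD : d ≤ (n - 1) / (m - 1) := by
      rw [Nat.le_div_iff_mul_le (by omega), Nat.mul_comm]
      omega
    exact ⟨d, ⟨hd, hdD⟩, a, ⟨hsub.1, by omega⟩, hX.symm⟩
  · rintro ⟨d, ⟨hd, hdD⟩, a, ⟨ha, haD⟩, rfl⟩
    have := (Nat.le_div_iff_mul_le (by omega)).mp hdD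
    rw [Nat.mul_comm] at this
    exact ⟨⟨(apFinset_subset_Icc_iff (by omega)).mpr ⟨ha, by omega⟩, card_apFinset hd⟩,
      periodicSet_apFinset hd hm⟩

lemma card_periodicSubsets {n m : ℕ} (hm : 2 ≤ m) :
    (periodicSubsets n m).card = ∑ d ∈ Finset.Icc 1 ((n - 1) / (m - 1)), (n - (m - 1) * d) := by
  rw [periodicSubsets_eq_biUnion hm, Finset.card_biUnion]
  · refine Finset.sum_congr rfl fun d hd => ?_
    have hd : 0 < d := (Finset.mem_Icc.mp hd).1
    rw [Finset.card_image_of_injOn fun a _ a' _ h => (apFinset_inj hd hd hm h).1, Nat.card_Icc,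
      Nat.add_sub_cancel]
  · intro d hd d' hd' hne
    refine Finset.disjoint_left.mpr fun X hX hX' => hne ?_
    simp only [Finset.mem_image] at hX hX'
    obtain ⟨a, -, rfl⟩ := hX
    obtain ⟨a', -, h⟩ := hX'
    exact (apFinset_inj (Finset.mem_Icc.mp hd').1 (Finset.mem_Icc.mp hd).1 hm h).2.symm

end PeriodicSubsets

lemma card_filter_powersetCard_sdiff {α : Type*} [DecidableEq α] (U : Finset α)
    (p : Finset α → Prop) [DecidablePred p] {k : ℕ} (hk : k ≤ U.card) :
    ((U.powersetCard k).filter fun S => p (U \ S)).card =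
      ((U.powersetCard (U.card - k)).filter p).card := by
  refine Finset.card_nbij' (U \ ·) (U \ ·) ?_ ?_ ?_ ?_ <;>
    simp only [Set.MapsTo, Set.LeftInvOn, Finset.coe_filter, Set.mem_ofPred_eq,
      Finset.mem_powersetCard]
  · rintro S ⟨⟨hS, rfl⟩, hp⟩
    exact ⟨⟨Finset.sdiff_subset, Finset.card_sdiff_of_subset hS⟩, hp⟩
  · rintro S ⟨⟨hS, hcard⟩, hp⟩
    refine ⟨⟨Finset.sdiff_subset, ?_⟩, by rwa [sdiff_sdiff_eq_self hS]⟩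
    rw [Finset.card_sdiff_of_subset hS, hcard]
    omega
  · rintro S ⟨⟨hS, -⟩, -⟩
    exact sdiff_sdiff_eq_self hS
  · rintro S ⟨⟨hS, -⟩, -⟩
    exact sdiff_sdiff_eq_self hS

section Words

variable {α : Type*} [DecidableEq α]

lemma mem_toList_permutations_toFinset {S : Finset α} {u : List α} :
    u ∈ S.toList.permutations.toFinset ↔ u.Nodup ∧ u.toFinset = S := by
  rw [List.mem_toFinset, List.mem_permutations]
  refine ⟨fun h => ⟨h.nodup_iff.mpr S.nodup_toList, ?_⟩, fun ⟨hu, hS⟩ => ?_⟩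
  · rw [List.toFinset_eq_of_perm _ _ h, Finset.toList_toFinset]
  · exact List.perm_of_nodup_nodup_toFinset_eq hu S.nodup_toList
      (by rw [hS, Finset.toList_toFinset])

lemma ncard_nodup_toFinset_mem (F : Finset (Finset α)) {k : ℕ} (hF : ∀ S ∈ F, S.card = k) :
    {u : List α | u.Nodup ∧ u.toFinset ∈ F}.ncard = F.card * k.factorial := by
  have hwords : {u : List α | u.Nodup ∧ u.toFinset ∈ F} =
      ↑(F.biUnion fun S => S.toList.permutations.toFinset) := by
    ext u
    simp only [Set.mem_ofPred_eq, Finset.coe_biUnion, Set.mem_iUnion, Finset.mem_coe,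
      mem_toList_permutations_toFinset]
    exact ⟨fun ⟨hu, hF⟩ => ⟨_, hF, hu, rfl⟩, fun ⟨_, hS, hu, rfl⟩ => ⟨hu, hS⟩⟩
  rw [hwords, Set.ncard_coe_finset, Finset.card_biUnion, Finset.sum_const_nat]
  · intro S hS
    rw [List.toFinset_card_of_nodup (List.nodup_permutations _ S.nodup_toList),
      List.length_permutations, Finset.length_toList, hF S hS]
  · intro S _ T _ hST
    refine Finset.disjoint_left.mpr fun u hS hT => hST ?_
    rw [mem_toList_permutations_toFinset] at hS hT
    rw [← hS.2, hT.2]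

end Words

theorem stmt5 (n i : ℕ) (hi : 1 ≤ i) (hin : i ≤ n - 2) :
    2 * Nat.card {u : List ℕ | u.length = i ∧ u.Nodup ∧ (∀ x ∈ u, x ∈ Finset.Icc 1 n) ∧
        PeriodicSet (Finset.Icc 1 n \ u.toFinset)} =
      (n / (n - i - 1)) * (n % (n - i - 1) + i + 1) * Nat.factorial i := by
  classical
  have hwords : {u : List ℕ | u.length = i ∧ u.Nodup ∧ (∀ x ∈ u, x ∈ Finset.Icc 1 n) ∧
      PeriodicSet (Finset.Icc 1 n \ u.toFinset)} = {u | u.Nodup ∧ u.toFinset ∈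
        ((Finset.Icc 1 n).powersetCard i).filter fun S => PeriodicSet (Finset.Icc 1 n \ S)} := by
    ext u
    simp only [Set.mem_ofPred_eq, Finset.mem_filter, Finset.mem_powersetCard, Finset.subset_iff,
      List.mem_toFinset]
    exact ⟨fun ⟨hlen, hu, hmem, hper⟩ =>
        ⟨hu, ⟨hmem, by rw [List.toFinset_card_of_nodup hu, hlen]⟩, hper⟩,
      fun ⟨hu, ⟨hmem, hcard⟩, hper⟩ =>
        ⟨by rw [← hcard, List.toFinset_card_of_nodup hu], hu, hmem, hper⟩⟩
  have hm : 2 ≤ n - i := by omega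
  rw [Nat.card_coe_set_eq, hwords, ncard_nodup_toFinset_mem _ fun S hS =>
      (Finset.mem_powersetCard.mp (Finset.mem_filter.mp hS).1).2,
    card_filter_powersetCard_sdiff _ PeriodicSet (by rw [Nat.card_Icc]; omega), Nat.card_Icc,
    Nat.add_sub_cancel,
    ← periodicSubsets, card_periodicSubsets hm, ← mul_assoc, Nat.two_mul_sum_Icc_div_sub_mul,
    show n - i - 1 = n - (i + 1) by omega, show n - (n - (i + 1)) = i + 1 by omega, add_assoc]
end

section
/- The numbers a_m of non-interval permutations of size m satisfy the recurrence ∑_{k=1}^{i} a_{k+1}·(i-k+1)! = (i+1)! for all i ≥ 1. -/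
/-!
Every permutation of `[i+1]` has a unique shortest prefix of length `k + 1 ≥ 2` whose letters form
an interval `{c+1, …, c+k+1}`. Subtracting `c` from that prefix gives a non-interval permutation of
`[k+1]`, while the rest of the word is an arbitrary arrangement of the remaining `i - k` letters.
With `i - k + 1` choices of `c`, exactly `a_{k+1} (i-k+1)!` permutations of `[i+1]` have a shortest
interval prefix of length `k + 1`.
-/

open Finset
open scoped Nat

lemma List.toFinset_map {α β : Type*} [DecidableEq α] [DecidableEq β] (f : α → β) (l : List α) :
    (l.map f).toFinset = l.toFinset.image f := by
  ext; simp

lemma List.Nodup.toFinset_drop {α : Type*} [DecidableEq α] {s : List α} (hs : s.Nodup) (m : ℕ) :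
    (s.drop m).toFinset = s.toFinset \ (s.take m).toFinset := by
  have hdisj : _root_.Disjoint (s.take m).toFinset (s.drop m).toFinset :=
    List.disjoint_toFinset_iff_disjoint.mpr (List.disjoint_take_drop hs le_rfl)
  rw [← union_sdiff_cancel_left hdisj, ← List.toFinset_append, List.take_append_drop]

section Enumerations

variable {α : Type*} [DecidableEq α]

noncomputable def enumerations (S : Finset α) : Finset (List α) :=
  S.toList.permutations.toFinset

lemma mem_enumerations {S : Finset α} {l : List α} :
    l ∈ enumerations S ↔ l.Nodup ∧ l.toFinset = S := by
  rw [enumerations, List.mem_toFinset, List.mem_permutations]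
  constructor
  · intro h
    exact ⟨h.nodup_iff.mpr S.nodup_toList, by rw [List.toFinset_eq_of_perm _ _ h, toList_toFinset]⟩
  · rintro ⟨hl, rfl⟩
    exact (List.perm_ext_iff_of_nodup hl (nodup_toList _)).mpr fun a => by simp

lemma card_enumerations (S : Finset α) : #(enumerations S) = (#S)! := by
  rw [enumerations, List.toFinset_card_of_nodup (List.nodup_permutations _ S.nodup_toList),
    List.length_permutations, length_toList]

end Enumerations

lemma mem_enumerations_Icc_one {n : ℕ} {l : List ℕ} :
    l ∈ enumerations (Icc 1 n) ↔ IsPermList n l := by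
  rw [mem_enumerations, IsPermList]
  refine ⟨fun ⟨hl, hset⟩ => ⟨?_, hl, hset⟩, fun ⟨_, hl, hset⟩ => ⟨hl, hset⟩⟩
  rw [← List.toFinset_card_of_nodup hl, hset, Nat.card_Icc, Nat.add_sub_cancel]

lemma exists_image_add_right_eq_Icc_iff {X : Finset ℕ} {c n : ℕ} :
    (∃ b, X.image (· + c) = Icc b (b + n)) ↔ ∃ a, X = Icc a (a + n) := by
  constructor
  · rintro ⟨b, hb⟩
    obtain ⟨a, -, rfl⟩ := mem_image.mp (hb ▸ left_mem_Icc.mpr (Nat.le_add_right b n))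
    refine ⟨a, image_injective (add_left_injective c) ?_⟩
    rw [hb, image_add_right_Icc, Nat.add_right_comm]
  · rintro ⟨a, rfl⟩
    exact ⟨a + c, by rw [image_add_right_Icc, Nat.add_right_comm]⟩

-- Written as in `IsNonIntervalPerm`, which thus unfolds to
-- `IsPermList m s ∧ ∀ l, 2 ≤ l → l < m → ¬ HasIntervalPrefix s l`.
def HasIntervalPrefix (s : List ℕ) (l : ℕ) : Prop :=
  ∃ a, (s.take l).toFinset = Icc a (a + l - 1)

lemma hasIntervalPrefix_map_add {t : List ℕ} {l : ℕ} (c : ℕ) (hl : 1 ≤ l) :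
    HasIntervalPrefix (t.map (· + c)) l ↔ HasIntervalPrefix t l := by
  obtain ⟨l, rfl⟩ := Nat.exists_eq_add_of_le' hl
  simp only [HasIntervalPrefix, ← List.map_take, List.toFinset_map, ← Nat.add_assoc,
    Nat.add_sub_cancel]
  exact exists_image_add_right_eq_Icc_iff

lemma hasIntervalPrefix_take {s : List ℕ} {l m : ℕ} (h : l ≤ m) :
    HasIntervalPrefix (s.take m) l ↔ HasIntervalPrefix s l := by
  simp only [HasIntervalPrefix, List.take_take, min_eq_left h]

lemma hasIntervalPrefix_append {t r : List ℕ} {l : ℕ} (h : l ≤ t.length) :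
    HasIntervalPrefix (t ++ r) l ↔ HasIntervalPrefix t l := by
  simp only [HasIntervalPrefix, List.take_append_of_le_length h]

def IsShortestIntervalPrefix (s : List ℕ) (m c : ℕ) : Prop :=
  (s.take m).toFinset = Icc (c + 1) (c + m) ∧ ∀ l, 2 ≤ l → l < m → ¬ HasIntervalPrefix s l

lemma exists_isShortestIntervalPrefix {n : ℕ} {s : List ℕ} (hs : IsPermList n s) (hn : 2 ≤ n) :
    ∃ m c, 2 ≤ m ∧ c + m ≤ n ∧ IsShortestIntervalPrefix s m c := by
  classical
  obtain ⟨hlen, -, hset⟩ := hs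
  have hP : ∃ l, 2 ≤ l ∧ HasIntervalPrefix s l :=
    ⟨n, hn, 1, by rw [List.take_of_length_le hlen.le, hset, Nat.add_sub_cancel_left]⟩
  obtain ⟨hm, a, ha⟩ := Nat.find_spec hP
  have hsub : Icc a (a + Nat.find hP - 1) ⊆ Icc 1 n := by
    rw [← ha, ← hset]
    exact fun x hx => List.mem_toFinset.mpr (List.mem_of_mem_take (List.mem_toFinset.mp hx))
  have hbounds := (Icc_subset_Icc_iff (by omega)).mp hsub
  refine ⟨Nat.find hP, a - 1, hm, by omega, ?_, fun l hl hlt hpre => Nat.find_min hP hlt ⟨hl, hpre⟩⟩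
  rw [ha]
  congr 1 <;> omega

lemma IsShortestIntervalPrefix.eq {s : List ℕ} {m c m' c' : ℕ} (h : IsShortestIntervalPrefix s m c)
    (h' : IsShortestIntervalPrefix s m' c') (hm : 2 ≤ m) (hm' : 2 ≤ m') : m = m' ∧ c = c' := by
  have not_lt : ∀ {m c m' c'}, IsShortestIntervalPrefix s m c → IsShortestIntervalPrefix s m' c' →
      2 ≤ m → ¬ m < m' := fun h h' hm hlt =>
    h'.2 _ hm hlt ⟨_, by rw [h.1]; congr 1; omega⟩
  obtain rfl : m = m' := by
    have := not_lt h h' hm; have := not_lt h' h hm'; omega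
  have hIcc := h.1.symm.trans h'.1
  have h1 : c + 1 ∈ Icc (c' + 1) (c' + m) := hIcc ▸ left_mem_Icc.mpr (by omega)
  have h2 : c' + 1 ∈ Icc (c + 1) (c + m) := hIcc ▸ left_mem_Icc.mpr (by omega)
  simp only [mem_Icc] at h1 h2
  omega

open scoped Classical in
noncomputable def nonIntervalPerms (m : ℕ) : Finset (List ℕ) :=
  (enumerations (Icc 1 m)).filter (IsNonIntervalPerm m)

open scoped Classical in
lemma mem_nonIntervalPerms {m : ℕ} {t : List ℕ} :
    t ∈ nonIntervalPerms m ↔ IsNonIntervalPerm m t := by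
  rw [nonIntervalPerms, mem_filter, mem_enumerations_Icc_one]
  exact ⟨And.right, fun h => ⟨h.1, h⟩⟩

lemma natCard_setOf_isNonIntervalPerm (m : ℕ) :
    Nat.card {s : List ℕ | IsNonIntervalPerm m s} = #(nonIntervalPerms m) := by
  have hset : {s : List ℕ | IsNonIntervalPerm m s} = nonIntervalPerms m := by
    ext; simp [mem_nonIntervalPerms]
  rw [hset, Nat.card_coe_set_eq, Set.ncard_coe_finset]

open scoped Classical in
noncomputable def shortestIntervalPrefixClass (n m c : ℕ) : Finset (List ℕ) :=
  (enumerations (Icc 1 n)).filter (IsShortestIntervalPrefix · m c)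

open scoped Classical in
lemma mem_shortestIntervalPrefixClass {n m c : ℕ} {s : List ℕ} :
    s ∈ shortestIntervalPrefixClass n m c ↔
      (s.Nodup ∧ s.toFinset = Icc 1 n) ∧ IsShortestIntervalPrefix s m c := by
  rw [shortestIntervalPrefixClass, mem_filter, mem_enumerations]

lemma map_sub_map_add_of_toFinset_eq_Icc {p : List ℕ} {c m : ℕ}
    (hp : p.toFinset = Icc (c + 1) (c + m)) : (p.map (· - c)).map (· + c) = p := by
  rw [List.map_map]
  refine (List.map_congr_left fun x hx => ?_).trans (List.map_id p)
  have : x ∈ Icc (c + 1) (c + m) := hp ▸ List.mem_toFinset.mpr hx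
  simp only [mem_Icc] at this
  simp only [Function.comp_apply, id_eq]
  omega

lemma standardize_mem_product {n m c : ℕ} {s : List ℕ}
    (hs : s ∈ shortestIntervalPrefixClass n m c) :
    ((s.take m).map (· - c), s.drop m) ∈
      nonIntervalPerms m ×ˢ enumerations (Icc 1 n \ Icc (c + 1) (c + m)) := by
  obtain ⟨⟨hnodup, hset⟩, hpre, hmin⟩ := mem_shortestIntervalPrefixClass.mp hs
  have hback := map_sub_map_add_of_toFinset_eq_Icc hpre
  set t := (s.take m).map (· - c)
  have htset : t.toFinset = Icc 1 m := by
    refine image_injective (add_left_injective c) ?_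
    rw [← List.toFinset_map, hback, hpre, image_add_right_Icc, Nat.add_comm, Nat.add_comm m]
  refine mem_product.mpr
    ⟨mem_nonIntervalPerms.mpr ⟨?_, fun l hl hlm (hpre' : HasIntervalPrefix t l) => ?_⟩, ?_⟩
  · refine mem_enumerations_Icc_one.mp (mem_enumerations.mpr ⟨?_, htset⟩)
    exact List.Nodup.of_map (· + c) (hback ▸ (List.take_sublist m s).nodup hnodup)
  · rw [← hasIntervalPrefix_map_add c (by omega), hback, hasIntervalPrefix_take hlm.le] at hpre'
    exact hmin l hl hlm hpre'
  · exact mem_enumerations.mpr ⟨(List.drop_sublist m s).nodup hnodup, by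
      rw [hnodup.toFinset_drop, hset, hpre]⟩

lemma inflate_mem_shortestIntervalPrefixClass {n m c : ℕ} (hcm : c + m ≤ n) {p : List ℕ × List ℕ}
    (hp : p ∈ nonIntervalPerms m ×ˢ enumerations (Icc 1 n \ Icc (c + 1) (c + m))) :
    p.1.map (· + c) ++ p.2 ∈ shortestIntervalPrefixClass n m c := by
  obtain ⟨t, r⟩ := p
  obtain ⟨ht, hr⟩ := mem_product.mp hp
  obtain ⟨⟨hlen, htnodup, htset⟩, hnonint⟩ := mem_nonIntervalPerms.mp ht
  obtain ⟨hrnodup, hrset⟩ := mem_enumerations.mp hr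
  have hmap : (t.map (· + c)).toFinset = Icc (c + 1) (c + m) := by
    rw [List.toFinset_map, htset, image_add_right_Icc, Nat.add_comm, Nat.add_comm m]
  have hmaplen : (t.map (· + c)).length = m := by rw [List.length_map, hlen]
  refine mem_shortestIntervalPrefixClass.mpr ⟨⟨?_, ?_⟩, ?_,
    fun l hl hlm (hpre : HasIntervalPrefix (t.map (· + c) ++ r) l) => ?_⟩
  · refine List.Nodup.append (htnodup.map (add_left_injective c)) hrnodup ?_
    rw [← List.disjoint_toFinset_iff_disjoint, hmap, hrset]
    exact disjoint_sdiff
  · rw [List.toFinset_append, hmap, hrset, union_sdiff_of_subset (Icc_subset_Icc (by omega) hcm)]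
  · rw [List.take_left' hmaplen, hmap]
  · rw [hasIntervalPrefix_append (by omega), hasIntervalPrefix_map_add c (by omega)] at hpre
    exact hnonint l hl hlm hpre

lemma card_shortestIntervalPrefixClass {n m c : ℕ} (hcm : c + m ≤ n) :
    #(shortestIntervalPrefixClass n m c) = #(nonIntervalPerms m) * (n - m)! := by
  have hsub : Icc (c + 1) (c + m) ⊆ Icc 1 n := Icc_subset_Icc (by omega) hcm
  have hcard : #(Icc 1 n \ Icc (c + 1) (c + m)) = n - m := by
    rw [card_sdiff_of_subset hsub, Nat.card_Icc, Nat.card_Icc]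
    omega
  rw [← hcard, ← card_enumerations, ← card_product]
  refine card_nbij' (fun s => ((s.take m).map (· - c), s.drop m)) (fun p => p.1.map (· + c) ++ p.2)
    (fun s hs => standardize_mem_product hs)
    (fun p hp => inflate_mem_shortestIntervalPrefixClass hcm hp) (fun s hs => ?_) (fun p hp => ?_)
  · obtain ⟨-, hpre, -⟩ := mem_shortestIntervalPrefixClass.mp hs
    simp only [map_sub_map_add_of_toFinset_eq_Icc hpre, List.take_append_drop]
  · obtain ⟨⟨hlen, -⟩, -⟩ := mem_nonIntervalPerms.mp (mem_product.mp hp).1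
    have hmaplen : (p.1.map (· + c)).length = m := by rw [List.length_map, hlen]
    simp only [List.take_left' hmaplen, List.drop_left' hmaplen, List.map_map]
    ext1
    · simp only [Function.comp_def, Nat.add_sub_cancel, List.map_id']
    · rfl

lemma enumerations_Icc_eq_biUnion {i : ℕ} (hi : 1 ≤ i) :
    enumerations (Icc 1 (i + 1)) = ((Icc 1 i).sigma fun k => range (i - k + 1)).biUnion
      fun p => shortestIntervalPrefixClass (i + 1) (p.1 + 1) p.2 := by
  ext s
  simp only [mem_biUnion, mem_sigma, mem_Icc, mem_range]
  constructor
  · intro hs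
    obtain ⟨m, c, hm, hcm, hshort⟩ :=
      exists_isShortestIntervalPrefix (mem_enumerations_Icc_one.mp hs) (by omega)
    obtain ⟨k, rfl⟩ : ∃ k, m = k + 1 := ⟨m - 1, by omega⟩
    exact ⟨⟨k, c⟩, show (1 ≤ k ∧ k ≤ i) ∧ c < i - k + 1 by omega,
      mem_shortestIntervalPrefixClass.mpr ⟨mem_enumerations.mp hs, hshort⟩⟩
  · rintro ⟨p, -, hs⟩
    exact mem_enumerations.mpr (mem_shortestIntervalPrefixClass.mp hs).1

lemma pairwiseDisjoint_shortestIntervalPrefixClass (n : ℕ) (S : Finset (Σ _ : ℕ, ℕ))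
    (hS : ∀ p ∈ S, 1 ≤ p.1) :
    (S : Set (Σ _ : ℕ, ℕ)).PairwiseDisjoint
      fun p => shortestIntervalPrefixClass n (p.1 + 1) p.2 := by
  intro p hp q hq hpq
  refine disjoint_left.mpr fun s hsp hsq => hpq ?_
  obtain ⟨hk, hc⟩ := (mem_shortestIntervalPrefixClass.mp hsp).2.eq
    (mem_shortestIntervalPrefixClass.mp hsq).2 (by simp [hS p hp]) (by simp [hS q hq])
  exact Sigma.ext (by omega) (heq_of_eq hc)

lemma factorial_succ_eq_sum_card_shortestIntervalPrefixClass {i : ℕ} (hi : 1 ≤ i) :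
    (i + 1)! = ∑ k ∈ Icc 1 i, ∑ c ∈ range (i - k + 1),
      #(shortestIntervalPrefixClass (i + 1) (k + 1) c) := by
  have hcard := congrArg card (enumerations_Icc_eq_biUnion hi)
  rwa [card_enumerations, Nat.card_Icc, Nat.add_sub_cancel, card_biUnion
    (pairwiseDisjoint_shortestIntervalPrefixClass _ _ fun p hp =>
      (mem_Icc.mp (mem_sigma.mp hp).1).1), sum_sigma] at hcard

theorem stmt9 (i : ℕ) (hi : 1 ≤ i) :
    ∑ k ∈ Finset.Icc 1 i,
        Nat.card {s : List ℕ | IsNonIntervalPerm (k + 1) s} * Nat.factorial (i - k + 1) =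
      Nat.factorial (i + 1) := by
  rw [factorial_succ_eq_sum_card_shortestIntervalPrefixClass hi]
  refine sum_congr rfl fun k hk => ?_
  have hki : k ≤ i := (mem_Icc.mp hk).2
  have hclass : ∀ c ∈ range (i - k + 1), #(shortestIntervalPrefixClass (i + 1) (k + 1) c) =
      #(nonIntervalPerms (k + 1)) * (i - k)! := fun c hc => by
    rw [card_shortestIntervalPrefixClass (by simp only [mem_range] at hc; omega),
      Nat.add_sub_add_right]
  rw [natCard_setOf_isNonIntervalPerm, sum_congr rfl hclass, sum_const, card_range, smul_eq_mul,
    Nat.factorial_succ]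
  ring
end

section
/- Let n ≥ 4. The number s_n of distinct pyramidal sequences of vectors of size n satisfies s_n = s_{n-1} + ∑_{i=2}^{n-2} d_{i,n}·s_{n-i}, where d_{i,n} is the number of trapezoidal sequences of height i of size n (equivalently |D_{i,n}|). -/
lemma List.isChain_iff_getD {α : Type*} {R : α → α → Prop} {l : List α} (d : α) :
    l.IsChain R ↔ ∀ i, i + 1 < l.length → R (l.getD i d) (l.getD (i + 1) d) := by
  rw [List.isChain_iff_getElem]
  refine forall_congr' fun i => ⟨fun h hi => ?_, fun h hi => ?_⟩ <;>
    grind [List.getD_eq_getElem]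

lemma List.IsChain.forall_mem_of_getD_zero {α : Type*} {R : α → α → Prop} {p : α → Prop}
    {l : List α} (hl : l.IsChain R) (hR : ∀ ⦃x y⦄, R x y → p x → p y) (d : α)
    (h0 : p (l.getD 0 d)) : ∀ x ∈ l, p x := by
  cases l with
  | nil => simp
  | cons a l => exact List.forall_mem_cons.2 ⟨h0, hl.cons_induction p l hR h0⟩

lemma List.finite_setOf_length_le_forall_mem {α : Type*} {s : Set α} (hs : s.Finite) (N : ℕ) :
    {l : List α | l.length ≤ N ∧ ∀ x ∈ l, x ∈ s}.Finite := by
  have := hs.to_subtype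
  refine ((List.finite_length_le s N).image (List.map Subtype.val)).subset ?_
  rintro l ⟨hlen, hl⟩
  lift l to List s using hl
  exact ⟨l, by simpa using hlen, rfl⟩

lemma Set.ncard_eq_sum_ncard_fiber {α β : Type*} [DecidableEq β] {s : Set α} (hs : s.Finite)
    {f : α → β} {t : Finset β} (h : ∀ a ∈ s, f a ∈ t) :
    s.ncard = ∑ b ∈ t, {a ∈ s | f a = b}.ncard := by
  rw [Set.ncard_eq_toFinset_card s hs, Finset.card_eq_sum_card_fiberwise (f := f) (t := t)
    fun a ha => h a (hs.mem_toFinset.1 ha)]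
  refine Finset.sum_congr rfl fun b _ => ?_
  rw [← Set.ncard_coe_finset, Finset.coe_filter]
  simp

namespace PyrStep

variable {v w : List ℕ}

lemma length_eq (h : PyrStep v w) : w.length + 1 = v.length := by
  rcases h with ⟨l, a, b, r, rfl, rfl⟩ | ⟨a, r, rfl, rfl⟩ | ⟨l, a, rfl, rfl⟩ <;> grind

lemma sum_le (h : PyrStep v w) : w.sum ≤ v.sum := by
  rcases h with ⟨l, a, b, r, rfl, rfl⟩ | ⟨a, r, rfl, rfl⟩ | ⟨l, a, rfl, rfl⟩ <;> grind

lemma forall_mem {p : ℕ → Prop} (hp : ∀ a b, p a → p b → p (a + b)) (h : PyrStep v w)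
    (hv : ∀ x ∈ v, p x) : ∀ x ∈ w, p x := by
  rcases h with ⟨l, a, b, r, rfl, rfl⟩ | ⟨a, r, rfl, rfl⟩ | ⟨l, a, rfl, rfl⟩
  · simp only [List.mem_append, List.mem_cons] at hv ⊢
    grind
  · exact fun x hx => hv x (List.mem_cons_of_mem _ hx)
  · exact fun x hx => hv x (List.mem_append_left _ hx)

lemma map_mul (d : ℕ) (h : PyrStep v w) : PyrStep (v.map (d * ·)) (w.map (d * ·)) := by
  rcases h with ⟨l, a, b, r, rfl, rfl⟩ | ⟨a, r, rfl, rfl⟩ | ⟨l, a, rfl, rfl⟩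
  · exact Or.inl ⟨l.map (d * ·), d * a, d * b, r.map (d * ·), by simp, by simp [Nat.mul_add]⟩
  · exact Or.inr (Or.inl ⟨d * a, w.map (d * ·), by simp, rfl⟩)
  · exact Or.inr (Or.inr ⟨w.map (d * ·), d * a, by simp, rfl⟩)

lemma map_div {d : ℕ} (hv : ∀ x ∈ v, d ∣ x) (h : PyrStep v w) :
    PyrStep (v.map (· / d)) (w.map (· / d)) := by
  rcases h with ⟨l, a, b, r, rfl, rfl⟩ | ⟨a, r, rfl, rfl⟩ | ⟨l, a, rfl, rfl⟩
  · refine Or.inl ⟨l.map (· / d), a / d, b / d, r.map (· / d), by simp, ?_⟩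
    simp [Nat.add_div_of_dvd_right (hv a (by simp))]
  · exact Or.inr (Or.inl ⟨a / d, w.map (· / d), by simp, rfl⟩)
  · exact Or.inr (Or.inr ⟨w.map (· / d), a / d, by simp, rfl⟩)

end PyrStep

lemma eq_replicate_one_of_pyrStep {m : ℕ} {w : List ℕ} (hm : 3 ≤ m)
    (h : PyrStep (List.replicate m 1) w) (hw : PerVec w) : w = List.replicate (m - 1) 1 := by
  obtain ⟨d, hd, hwd⟩ := hw
  have hlen : w.length = m - 1 := by have := h.length_eq; simp at this; omega
  have hsum : (m - 1) * d ≤ m := by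
    have := h.sum_le
    rw [hwd, hlen] at this
    simpa using this
  have hd1 : d = 1 := by
    rcases Nat.lt_or_ge d 2 with h2 | h2
    · omega
    · have := Nat.mul_le_mul_left (m - 1) h2; omega
  rw [hwd, hlen, hd1]

lemma PerVec.eq_replicate_headD {v : List ℕ} (h : PerVec v) :
    v = List.replicate v.length (v.headD 1) := by
  obtain ⟨d, -, hv⟩ := h
  rcases v with _ | ⟨a, t⟩
  · rfl
  · simp only [List.length_cons, List.replicate_succ, List.cons.injEq] at hv
    simp [List.replicate_succ, hv.1, ← hv.2]

lemma PerVec.headD_pos {v : List ℕ} (h : PerVec v) (hv : v ≠ []) : 0 < v.headD 1 := by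
  obtain ⟨d, hd, hvd⟩ := h
  rcases v with _ | ⟨a, t⟩
  · exact absurd rfl hv
  · rw [hvd]; simpa [List.replicate_succ] using hd

lemma isPyramidal_iff {n : ℕ} {P : List (List ℕ)} :
    IsPyramidal n P ↔
      P.length = n - 1 ∧ P.getD 0 [] = List.replicate (n - 1) 1 ∧ P.IsChain PyrStep := by
  rw [IsPyramidal, List.isChain_iff_getD []]
  grind

lemma isTrapezoidal_iff {n i : ℕ} {T : List (List ℕ)} :
    IsTrapezoidal n i T ↔
      T.length = i + 1 ∧ T.getD 0 [] = List.replicate (n - 1) 1 ∧ T.IsChain PyrStep ∧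
        PerVec (T.getD i []) ∧ ∀ j, 1 ≤ j → j < i → ¬ PerVec (T.getD j []) := by
  rw [IsTrapezoidal, List.isChain_iff_getD []]
  grind

lemma length_getD_add_of_isChain {P : List (List ℕ)} (hP : P.IsChain PyrStep) {j : ℕ}
    (hj : j < P.length) : (P.getD j []).length + j = (P.getD 0 []).length := by
  induction j with
  | zero => rfl
  | succ j ih =>
    have := ((List.isChain_iff_getD []).1 hP j hj).length_eq
    have := ih (by omega)
    omega

lemma getD_eq_replicate_of_isChain {P : List (List ℕ)} (hP : P.IsChain PyrStep) {m j : ℕ}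
    (h0 : P.getD 0 [] = List.replicate m 1) (hj : j < P.length) (hper : PerVec (P.getD j [])) :
    P.getD j [] = List.replicate (m - j) ((P.getD j []).headD 1) := by
  have hlen := length_getD_add_of_isChain hP hj
  rw [h0, List.length_replicate] at hlen
  rw [← show (P.getD j []).length = m - j by omega]
  exact hper.eq_replicate_headD

-- Levels are 0-indexed (`P.getD j []` is `Δ_{j+1}`), so this is the height `i` of the paper.
noncomputable def firstPeriodicLevel (P : List (List ℕ)) : ℕ :=
  sInf {j | 1 ≤ j ∧ PerVec (P.getD j [])}

namespace IsPyramidal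

variable {n : ℕ} {P : List (List ℕ)}

lemma forall_mem (hP : IsPyramidal n P) {p : List ℕ → Prop}
    (hp : ∀ ⦃v w⦄, PyrStep v w → p v → p w) (h0 : p (List.replicate (n - 1) 1)) :
    ∀ v ∈ P, p v :=
  (isPyramidal_iff.1 hP).2.2.forall_mem_of_getD_zero hp [] (hP.2.1 ▸ h0)

lemma perVec_getD_sub_two (hP : IsPyramidal n P) (hn : 3 ≤ n) : PerVec (P.getD (n - 2) []) := by
  obtain ⟨a, ha⟩ : ∃ a, P.getD (n - 2) [] = [a] :=
    List.length_eq_one_iff.1 <| by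
      have := length_getD_add_of_isChain (isPyramidal_iff.1 hP).2.2 (j := n - 2)
        (by rw [hP.1]; omega)
      rw [hP.2.1, List.length_replicate] at this
      omega
  have hpos := hP.forall_mem (p := fun v => ∀ x ∈ v, 0 < x)
    (fun _ _ h => h.forall_mem fun _ _ ha _ => Nat.add_pos_left ha _) (by simp)
  have hmem : P.getD (n - 2) [] ∈ P := by
    rw [List.getD_eq_getElem _ _ (by rw [hP.1]; omega)]
    exact List.getElem_mem _
  rw [ha] at hmem ⊢
  exact ⟨a, hpos _ hmem a (by simp), rfl⟩

lemma isLeast_firstPeriodicLevel (hP : IsPyramidal n P) (hn : 3 ≤ n) :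
    IsLeast {j | 1 ≤ j ∧ PerVec (P.getD j [])} (firstPeriodicLevel P) :=
  isLeast_csInf ⟨n - 2, by omega, hP.perVec_getD_sub_two hn⟩

lemma firstPeriodicLevel_mem_Icc (hP : IsPyramidal n P) (hn : 3 ≤ n) :
    firstPeriodicLevel P ∈ Finset.Icc 1 (n - 2) :=
  Finset.mem_Icc.2 ⟨(hP.isLeast_firstPeriodicLevel hn).1.1,
    (hP.isLeast_firstPeriodicLevel hn).2 ⟨by omega, hP.perVec_getD_sub_two hn⟩⟩

lemma isTrapezoidal_take_iff (hP : IsPyramidal n P) {i : ℕ} (hin : i + 2 ≤ n) :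
    IsTrapezoidal n i (P.take (i + 1)) ↔
      PerVec (P.getD i []) ∧ ∀ j, 1 ≤ j → j < i → ¬ PerVec (P.getD j []) := by
  have hget : ∀ j ≤ i, (P.take (i + 1)).getD j [] = P.getD j [] := by
    intro j hj
    simp [List.getD_eq_getElem?_getD, show j < i + 1 by omega]
  obtain ⟨hlen, h0, hchain⟩ := isPyramidal_iff.1 hP
  rw [isTrapezoidal_iff, hget 0 (Nat.zero_le _), hget i le_rfl]
  have hlen' : (P.take (i + 1)).length = i + 1 := by simp; omega
  have hforall : (∀ j, 1 ≤ j → j < i → ¬ PerVec ((P.take (i + 1)).getD j [])) ↔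
      ∀ j, 1 ≤ j → j < i → ¬ PerVec (P.getD j []) :=
    forall_congr' fun j => by grind
  rw [hforall]
  exact ⟨fun h => h.2.2.2, fun h => ⟨hlen', h0, hchain.take _, h⟩⟩

lemma firstPeriodicLevel_eq_iff (hP : IsPyramidal n P) {i : ℕ} (hi : 1 ≤ i)
    (hin : i + 2 ≤ n) : firstPeriodicLevel P = i ↔ IsTrapezoidal n i (P.take (i + 1)) := by
  rw [hP.isTrapezoidal_take_iff hin]
  constructor
  · rintro rfl
    obtain ⟨⟨-, hper⟩, hleast⟩ := hP.isLeast_firstPeriodicLevel (by omega)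
    exact ⟨hper, fun j hj hji hj' => absurd (hleast ⟨hj, hj'⟩) (by omega)⟩
  · rintro ⟨hper, hmin⟩
    refine IsLeast.csInf_eq ⟨⟨hi, hper⟩, fun j ⟨hj, hj'⟩ => ?_⟩
    by_contra! hji
    exact hmin j hj hji hj'

lemma getD_eq_replicate (hP : IsPyramidal n P) {i : ℕ} (hin : i + 2 ≤ n)
    (hper : PerVec (P.getD i [])) :
    P.getD i [] = List.replicate (n - 1 - i) ((P.getD i []).headD 1) :=
  getD_eq_replicate_of_isChain (isPyramidal_iff.1 hP).2.2 hP.2.1 (by rw [hP.1]; omega) hper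

lemma dvd_of_mem_drop (hP : IsPyramidal n P) {i : ℕ} (hin : i + 2 ≤ n)
    (hper : PerVec (P.getD i [])) :
    ∀ v ∈ P.drop i, ∀ x ∈ v, (P.getD i []).headD 1 ∣ x := by
  refine ((isPyramidal_iff.1 hP).2.2.drop i).forall_mem_of_getD_zero
    (fun _ _ h => h.forall_mem fun _ _ => dvd_add) [] ?_
  rw [List.getD_eq_getElem?_getD, List.getElem?_drop, Nat.add_zero,
    ← List.getD_eq_getElem?_getD]
  intro x hx
  rw [hP.getD_eq_replicate hin hper] at hx
  rw [List.eq_of_mem_replicate hx]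

end IsPyramidal

lemma finite_setOf_isPyramidal (n : ℕ) : {P | IsPyramidal n P}.Finite := by
  have hlevels := List.finite_setOf_length_le_forall_mem (Set.finite_Iic n) n
  refine (List.finite_setOf_length_le_forall_mem hlevels n).subset fun P hP => ?_
  have hbound := hP.forall_mem (p := fun v => v.length ≤ n ∧ v.sum ≤ n)
    (fun _ _ h hv => ⟨by have := h.length_eq; omega, h.sum_le.trans hv.2⟩) (by simp)
  refine ⟨by rw [hP.1]; omega, fun v hv => ⟨(hbound v hv).1, fun x hx => ?_⟩⟩
  exact (List.le_sum_of_mem hx).trans (hbound v hv).2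

lemma IsTrapezoidal.getD_eq_replicate {n i : ℕ} {T : List (List ℕ)}
    (hT : IsTrapezoidal n i T) : T.getD i [] = List.replicate (n - 1 - i) ((T.getD i []).headD 1) :=
  getD_eq_replicate_of_isChain (isTrapezoidal_iff.1 hT).2.2.1 hT.2.1 (by rw [hT.1]; omega)
    hT.2.2.2.1

def splitAtLevel (i : ℕ) (P : List (List ℕ)) : List (List ℕ) × List (List ℕ) :=
  (P.take (i + 1), (P.drop i).map (List.map (· / (P.getD i []).headD 1)))

-- The first level of `Q` is dropped: it is the last level of `T` divided by its period.
def glueAtLevel (i : ℕ) (TQ : List (List ℕ) × List (List ℕ)) : List (List ℕ) :=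
  TQ.1 ++ TQ.2.tail.map (List.map ((TQ.1.getD i []).headD 1 * ·))

section Splitting

variable {n i : ℕ} {P T Q : List (List ℕ)}

lemma mapsTo_splitAtLevel (hi : 1 ≤ i) (hin : i + 2 ≤ n) :
    Set.MapsTo (splitAtLevel i) {P ∈ {P | IsPyramidal n P} | firstPeriodicLevel P = i}
      ({T | IsTrapezoidal n i T} ×ˢ {Q | IsPyramidal (n - i) Q}) := by
  rintro P ⟨hP, hfirst⟩
  have htrap := (hP.firstPeriodicLevel_eq_iff hi hin).1 hfirst
  have hper := ((hP.isTrapezoidal_take_iff hin).1 htrap).1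
  set d := (P.getD i []).headD 1 with hd_def
  have hPi : P.getD i [] = List.replicate (n - 1 - i) d := hP.getD_eq_replicate hin hper
  have hd : 0 < d := hper.headD_pos (by rw [hPi]; simp; omega)
  have hlt : i < P.length := by rw [hP.1]; omega
  have hdrop : P.drop i = P.getD i [] :: P.drop (i + 1) := by
    rw [List.getD_eq_getElem _ _ hlt]; exact List.drop_eq_getElem_cons hlt
  refine ⟨htrap, isPyramidal_iff.2 ⟨by simp [splitAtLevel, hP.1]; omega, ?_, ?_⟩⟩
  · rw [splitAtLevel, hdrop, List.map_cons, List.getD_cons_zero, ← hd_def, hPi,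
      List.map_replicate, Nat.div_self hd]
    congr 1
    omega
  · rw [splitAtLevel, List.isChain_map]
    exact ((isPyramidal_iff.1 hP).2.2.drop i).imp_of_mem_imp
      fun v _ hv _ h => h.map_div (hP.dvd_of_mem_drop hin hper v hv)

lemma glueAtLevel_splitAtLevel (hP : IsPyramidal n P) (hin : i + 2 ≤ n)
    (hper : PerVec (P.getD i [])) : glueAtLevel i (splitAtLevel i P) = P := by
  have hget : (P.take (i + 1)).getD i [] = P.getD i [] := by
    simp [List.getD_eq_getElem?_getD]
  have hmul_div : ∀ v ∈ P.drop (i + 1),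
      (v.map (· / (P.getD i []).headD 1)).map ((P.getD i []).headD 1 * ·) = v := by
    intro v hv
    rw [← List.tail_drop] at hv
    have hdvd := hP.dvd_of_mem_drop hin hper v (List.mem_of_mem_tail hv)
    rw [List.map_map]
    exact List.map_congr_left (fun x hx => Nat.mul_div_cancel' (hdvd x hx)) |>.trans
      (List.map_id v)
  rw [glueAtLevel, splitAtLevel, hget, ← List.map_tail, List.tail_drop, List.map_map]
  conv_rhs => rw [← List.take_append_drop (i + 1) P]
  congr 1
  exact (List.map_congr_left hmul_div).trans (List.map_id _)

lemma splitAtLevel_glueAtLevel (hT : IsTrapezoidal n i T) (hQ : IsPyramidal (n - i) Q)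
    (hin : i + 2 ≤ n) : splitAtLevel i (glueAtLevel i (T, Q)) = (T, Q) := by
  set d := (T.getD i []).headD 1 with hd_def
  have hTi : T.getD i [] = List.replicate (n - 1 - i) d := hT.getD_eq_replicate
  have hd : 0 < d := hT.2.2.2.1.headD_pos (by rw [hTi]; simp; omega)
  have hget : (glueAtLevel i (T, Q)).getD i [] = T.getD i [] :=
    List.getD_append _ _ _ _ (by rw [hT.1]; omega)
  have hTdrop : T.drop i = [T.getD i []] := by
    have := hT.1
    rw [List.getD_eq_getElem _ _ (by omega), List.drop_eq_getElem_cons, List.drop_of_length_le]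
    omega
  obtain ⟨Q0, Qt, rfl⟩ : ∃ Q0 Qt, Q = Q0 :: Qt :=
    List.exists_cons_of_ne_nil (by rintro rfl; have := hQ.1; simp at this; omega)
  have hQ0 : Q0 = List.replicate (n - 1 - i) 1 := by
    have := hQ.2.1; simp only [List.getD_cons_zero] at this; rw [this]; congr 1; omega
  rw [splitAtLevel, hget, ← hd_def, glueAtLevel, List.take_left' hT.1,
    List.drop_append_of_le_length (by rw [hT.1]; omega), hTdrop, ← hd_def, hTi, hQ0]
  have hcancel : (· / d) ∘ (d * ·) = id := funext fun x => Nat.mul_div_cancel_left x hd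
  simp [Nat.div_self hd, hcancel]

lemma isPyramidal_glueAtLevel (hT : IsTrapezoidal n i T) (hQ : IsPyramidal (n - i) Q)
    (hin : i + 2 ≤ n) : IsPyramidal n (glueAtLevel i (T, Q)) := by
  set d := (T.getD i []).headD 1 with hd_def
  obtain ⟨hTlen, hT0, hTchain, -, -⟩ := isTrapezoidal_iff.1 hT
  obtain ⟨Q0, Qt, rfl⟩ : ∃ Q0 Qt, Q = Q0 :: Qt :=
    List.exists_cons_of_ne_nil (by rintro rfl; have := hQ.1; simp at this; omega)
  obtain ⟨hQlen, hQ0, hQchain⟩ := isPyramidal_iff.1 hQ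
  rw [List.getD_cons_zero] at hQ0
  rw [List.isChain_cons] at hQchain
  refine isPyramidal_iff.2 ⟨?_, ?_, ?_⟩
  · simp only [glueAtLevel, List.length_append, List.length_map, List.length_cons,
      List.tail_cons] at hQlen ⊢
    omega
  · rw [glueAtLevel, List.getD_append T _ [] 0 (by omega), hT0]
  · refine hTchain.append ((List.isChain_map _).2 (hQchain.2.imp fun _ _ h => h.map_mul d)) ?_
    intro x hx y hy
    rw [List.getLast?_eq_getElem?, hTlen, Nat.add_sub_cancel, Option.mem_def] at hx
    simp only [List.tail_cons, List.head?_map, Option.mem_map, ← hd_def] at hy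
    obtain ⟨y, hy, rfl⟩ := hy
    have hx : x = Q0.map (d * ·) := by
      rw [hQ0, List.map_replicate, mul_one, show n - i - 1 = n - 1 - i by omega,
        ← hT.getD_eq_replicate, List.getD_eq_getElem?_getD, hx, Option.getD_some]
    exact hx ▸ (hQchain.1 y hy).map_mul d

lemma mapsTo_glueAtLevel (hi : 1 ≤ i) (hin : i + 2 ≤ n) :
    Set.MapsTo (glueAtLevel i) ({T | IsTrapezoidal n i T} ×ˢ {Q | IsPyramidal (n - i) Q})
      {P ∈ {P | IsPyramidal n P} | firstPeriodicLevel P = i} := by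
  rintro ⟨T, Q⟩ ⟨hT, hQ⟩
  have hP := isPyramidal_glueAtLevel hT hQ hin
  refine ⟨hP, (hP.firstPeriodicLevel_eq_iff hi hin).2 ?_⟩
  rwa [glueAtLevel, List.take_left' hT.1]

lemma bijOn_splitAtLevel (hi : 1 ≤ i) (hin : i + 2 ≤ n) :
    Set.BijOn (splitAtLevel i) {P ∈ {P | IsPyramidal n P} | firstPeriodicLevel P = i}
      ({T | IsTrapezoidal n i T} ×ˢ {Q | IsPyramidal (n - i) Q}) := by
  refine Set.InvOn.bijOn ⟨fun P ⟨hP, hfirst⟩ => ?_, fun ⟨T, Q⟩ ⟨hT, hQ⟩ => ?_⟩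
    (mapsTo_splitAtLevel hi hin) (mapsTo_glueAtLevel hi hin)
  · exact glueAtLevel_splitAtLevel hP hin
      ((hP.isTrapezoidal_take_iff hin).1 ((hP.firstPeriodicLevel_eq_iff hi hin).1 hfirst)).1
  · exact splitAtLevel_glueAtLevel hT hQ hin

end Splitting

lemma setOf_isTrapezoidal_one {n : ℕ} (hn : 4 ≤ n) :
    {T | IsTrapezoidal n 1 T} = {[List.replicate (n - 1) 1, List.replicate (n - 2) 1]} := by
  have hones : List.replicate (n - 1) 1 = 1 :: List.replicate (n - 2) 1 := by
    rw [← List.replicate_succ]; congr 1; omega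
  ext T
  constructor
  · intro hT
    obtain ⟨a, b, rfl⟩ := List.length_eq_two.1 hT.1
    obtain ⟨-, ha, hstep, hper, -⟩ := hT
    have hb := eq_replicate_one_of_pyrStep (by omega) (ha ▸ hstep 0 one_pos) hper
    simp only [List.getD_cons_zero, List.getD_cons_succ] at ha hb
    rw [ha, hb]
    rfl
  · rintro rfl
    refine ⟨rfl, rfl, fun j hj => ?_, ⟨1, one_pos, by simp⟩,
      fun j _ hj' => absurd hj' (by omega)⟩
    obtain rfl : j = 0 := by omega
    exact Or.inr (Or.inl ⟨1, _, hones, rfl⟩)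

theorem stmt15 (n : ℕ) (hn : 4 ≤ n) :
    Nat.card {P : List (List ℕ) | IsPyramidal n P} =
      Nat.card {P : List (List ℕ) | IsPyramidal (n - 1) P} +
      ∑ i ∈ Finset.Icc 2 (n - 2),
        Nat.card {T : List (List ℕ) | IsTrapezoidal n i T} *
          Nat.card {P : List (List ℕ) | IsPyramidal (n - i) P} := by
  have hfiber : ∀ i ∈ Finset.Icc 1 (n - 2),
      {P ∈ {P | IsPyramidal n P} | firstPeriodicLevel P = i}.ncard =
        {T | IsTrapezoidal n i T}.ncard * {Q | IsPyramidal (n - i) Q}.ncard := by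
    intro i hi
    rw [Finset.mem_Icc] at hi
    rw [(bijOn_splitAtLevel hi.1 (by omega)).ncard_eq, Set.ncard_prod]
  simp only [Nat.card_coe_set_eq]
  rw [Set.ncard_eq_sum_ncard_fiber (finite_setOf_isPyramidal n)
      fun P hP => hP.firstPeriodicLevel_mem_Icc (by omega),
    Finset.sum_congr rfl hfiber, ← Finset.insert_Icc_add_one_left_eq_Icc (by omega : 1 ≤ n - 2),
    Finset.sum_insert (by simp), setOf_isTrapezoidal_one hn, Set.ncard_singleton, one_mul]
  rfl
end
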